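/- In ℂ[x,y], set p = x − x² − x²y − 1 and q = x − (1 + x + xy)². Then: (a) the quotient algebras ℂ[x,y]/⟨p⟩ and ℂ[x,y]/⟨q⟩ are isomorphic as ℂ-algebras; (b) there is no point of ℂ² at which both partial derivatives of p vanish; (c) both partial derivatives of q vanish at the point (0, −1/2); and consequently (d) there is no ℂ-algebra automorphism σ of ℂ[x,y] such that σ(⟨p⟩) = ⟨q⟩. -/

import Mathlib

/-!
Both curves are isomorphic to the hyperbola `ts = 1`, that is to `ℂ*`: on `V(p)` the coordinate
`x` is a unit with inverse `1 - x - xy`, and on `V(q)` so is `u = 1 + x + xy`, with inverse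
`1 - u(1 + y)`, while `x = u²` there.

The embeddings are nevertheless inequivalent. Units of `ℂ[x,y]` are constants, so an automorphism
carrying `⟨p⟩` onto `⟨q⟩` sends `p` to a constant multiple of `q`; by the chain rule its inverse then
moves the common zero `(0, -1/2)` of `grad q` to a common zero of `grad p = (1 - 2x - 2xy, -x²)`,
which has none.
-/

open MvPolynomial

namespace MvPolynomial

section Quotient

variable {σ τ R : Type*} [CommRing R]

theorem quotient_algHom_ext {B : Type*} [CommRing B] [Algebra R B] {I : Ideal (MvPolynomial σ R)}
    {f g : (MvPolynomial σ R ⧸ I) →ₐ[R] B}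
    (h : ∀ i, f (Ideal.Quotient.mk I (X i)) = g (Ideal.Quotient.mk I (X i))) : f = g :=
  Ideal.Quotient.algHom_ext R (algHom_ext h)

noncomputable def quotientAlgEquivOfAeval {I : Ideal (MvPolynomial σ R)}
    {J : Ideal (MvPolynomial τ R)} (F : σ → MvPolynomial τ R) (G : τ → MvPolynomial σ R)
    (hF : I ≤ J.comap (aeval F)) (hG : J ≤ I.comap (aeval G))
    (hGF : ∀ i, aeval G (F i) - X i ∈ I) (hFG : ∀ j, aeval F (G j) - X j ∈ J) :
    (MvPolynomial σ R ⧸ I) ≃ₐ[R] (MvPolynomial τ R ⧸ J) :=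
  AlgEquiv.ofAlgHom (Ideal.quotientMapₐ J (aeval F) hF) (Ideal.quotientMapₐ I (aeval G) hG)
    (quotient_algHom_ext fun j => by simpa using Ideal.Quotient.eq.mpr (hFG j))
    (quotient_algHom_ext fun i => by simpa using Ideal.Quotient.eq.mpr (hGF i))

end Quotient

section CriticalPoint

variable {σ R : Type*} [CommRing R]

/-- Unlike a singular point, `a` is not required to lie on `V(p)`. -/
def IsCriticalPoint (p : MvPolynomial σ R) (a : σ → R) : Prop :=
  ∀ i, eval a (pderiv i p) = 0

theorem pderiv_aeval [Fintype σ] (g : σ → MvPolynomial σ R) (j : σ) (f : MvPolynomial σ R) :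
    pderiv j (aeval g f) = ∑ i, aeval g (pderiv i f) * pderiv j (g i) := by
  classical
  induction f using MvPolynomial.induction_on with
  | C a => simp
  | add f₁ f₂ h₁ h₂ => simp only [map_add, h₁, h₂, add_mul, Finset.sum_add_distrib]
  | mul_X f i h =>
    have pderiv_X_term (k : σ) : aeval g (pderiv k (X i : MvPolynomial σ R)) * pderiv j (g k) =
        if i = k then pderiv j (g i) else 0 := by
      by_cases hik : i = k
      · simp [hik]
      · simp [pderiv_X_of_ne hik, hik]
    simp only [map_mul, aeval_X, pderiv_mul, h, map_add, add_mul, Finset.sum_add_distrib,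
      mul_assoc, pderiv_X_term, ← Finset.mul_sum, Finset.sum_ite_eq, Finset.mem_univ, if_true]
    rw [Finset.sum_mul]
    exact congrArg (· + _) (Finset.sum_congr rfl fun k _ => by ring)

theorem eval_algHom_apply {τ : Type*} (φ : MvPolynomial σ R →ₐ[R] MvPolynomial τ R)
    (a : τ → R) (f : MvPolynomial σ R) :
    eval a (φ f) = eval (fun i => eval a (φ (X i))) f := by
  induction f using MvPolynomial.induction_on with
  | C r => simp
  | add f₁ f₂ h₁ h₂ => simp only [map_add, h₁, h₂]
  | mul_X f i h => simp only [map_mul, eval_X, h]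

theorem IsCriticalPoint.C_mul {q : MvPolynomial σ R} {a : σ → R} (h : IsCriticalPoint q a)
    (c : R) : IsCriticalPoint (C c * q) a := fun i => by
  rw [pderiv_C_mul, eval_mul, h i, mul_zero]

theorem IsCriticalPoint.of_algEquiv [Fintype σ] (e : MvPolynomial σ R ≃ₐ[R] MvPolynomial σ R)
    {p : MvPolynomial σ R} {a : σ → R} (h : IsCriticalPoint (e p) a) :
    IsCriticalPoint p fun i => eval a (e (X i)) := by
  have eval_symm (f) : eval (fun i => eval a (e (X i))) (e.symm f) = eval a f := by
    simpa using (eval_algHom_apply e.toAlgHom a (e.symm f)).symm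
  have symm_eq_aeval (f) : e.symm f = aeval (fun i => e.symm (X i)) f :=
    AlgHom.congr_fun (aeval_unique e.symm.toAlgHom) f
  intro j
  rw [← e.symm_apply_apply p, symm_eq_aeval, pderiv_aeval, map_sum]
  refine Finset.sum_eq_zero fun i _ => ?_
  rw [eval_mul, ← symm_eq_aeval, eval_symm, h i, zero_mul]

theorem exists_C_mul_eq_of_map_span_eq [IsDomain R]
    (e : MvPolynomial σ R ≃ₐ[R] MvPolynomial σ R) {p q : MvPolynomial σ R}
    (h : Ideal.map e (Ideal.span {p}) = Ideal.span {q}) : ∃ c : R, e p = C c * q := by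
  rw [Ideal.map_span, Set.image_singleton, Ideal.span_singleton_eq_span_singleton] at h
  obtain ⟨u, hu⟩ := h.symm
  obtain ⟨c, -, hc⟩ := isUnit_iff_eq_C_of_isReduced.mp u.isUnit
  exact ⟨c, by rw [← hc, ← hu, mul_comm]⟩

theorem exists_isCriticalPoint_of_map_span_eq [Fintype σ] [IsDomain R]
    (e : MvPolynomial σ R ≃ₐ[R] MvPolynomial σ R) {p q : MvPolynomial σ R}
    (h : Ideal.map e (Ideal.span {p}) = Ideal.span {q}) {a : σ → R} (ha : IsCriticalPoint q a) :
    ∃ b, IsCriticalPoint p b := by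
  obtain ⟨c, hc⟩ := exists_C_mul_eq_of_map_span_eq e h
  exact ⟨_, IsCriticalPoint.of_algEquiv e (hc ▸ ha.C_mul c)⟩

end CriticalPoint

end MvPolynomial

namespace Example33

variable (R : Type*) [CommRing R]

noncomputable def p : MvPolynomial (Fin 2) R := X 0 - X 0 ^ 2 - X 0 ^ 2 * X 1 - 1

noncomputable def q : MvPolynomial (Fin 2) R := X 0 - (1 + X 0 + X 0 * X 1) ^ 2

/-- Its quotient ring is `R[t, t⁻¹]`, with `t = X 0` and `t⁻¹ = X 1`. -/
noncomputable def hyperbola : MvPolynomial (Fin 2) R := X 0 * X 1 - 1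

variable {R}

noncomputable def quotientPEquivHyperbola :
    (MvPolynomial (Fin 2) R ⧸ Ideal.span {p R}) ≃ₐ[R]
      (MvPolynomial (Fin 2) R ⧸ Ideal.span {hyperbola R}) := by
  refine quotientAlgEquivOfAeval ![X 0, X 1 - 1 - X 1 ^ 2] ![X 0, 1 - X 0 - X 0 * X 1]
    ((Ideal.span_singleton_le_iff_mem _).mpr
      (Ideal.mem_span_singleton'.mpr ⟨X 0 * X 1 + 1 - X 0, ?_⟩))
    ((Ideal.span_singleton_le_iff_mem _).mpr (Ideal.mem_span_singleton'.mpr ⟨1, ?_⟩))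
    (Fin.forall_fin_two.mpr ⟨by simp, Ideal.mem_span_singleton'.mpr ⟨1 + X 1, ?_⟩⟩)
    (Fin.forall_fin_two.mpr ⟨by simp, Ideal.mem_span_singleton'.mpr ⟨X 1 - 1, ?_⟩⟩) <;>
  simp only [p, hyperbola, map_sub, map_mul, map_pow, map_one, aeval_X,
    Matrix.cons_val_zero, Matrix.cons_val_one, Matrix.cons_val_fin_one] <;>
  ring

noncomputable def quotientQEquivHyperbola :
    (MvPolynomial (Fin 2) R ⧸ Ideal.span {q R}) ≃ₐ[R]
      (MvPolynomial (Fin 2) R ⧸ Ideal.span {hyperbola R}) := by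
  refine quotientAlgEquivOfAeval ![X 0 ^ 2, (X 0 - 1) * X 1 ^ 2 - 1]
    ![1 + X 0 + X 0 * X 1, 1 - (1 + X 0 + X 0 * X 1) * (1 + X 1)]
    ((Ideal.span_singleton_le_iff_mem _).mpr (Ideal.mem_span_singleton'.mpr
      ⟨-((X 0 - 1) * (X 0 * X 1 + 1) * (1 + X 0 + (X 0 - 1) * (X 0 * X 1) ^ 2)), ?_⟩))
    ((Ideal.span_singleton_le_iff_mem _).mpr (Ideal.mem_span_singleton'.mpr ⟨1 + X 1, ?_⟩))
    (Fin.forall_fin_two.mpr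
      ⟨Ideal.mem_span_singleton'.mpr ⟨-1, ?_⟩,
        Ideal.mem_span_singleton'.mpr ⟨(1 + X 1) * (1 - (1 + X 0 + X 0 * X 1) * (1 + X 1)) ^ 2 +
          (1 + X 1) ^ 2 * ((1 + X 0 + X 0 * X 1) * (1 - (1 + X 0 + X 0 * X 1) * (1 + X 1)) + 1),
          ?_⟩⟩)
    (Fin.forall_fin_two.mpr
      ⟨Ideal.mem_span_singleton'.mpr ⟨(X 0 - 1) * (X 0 * X 1 + 1), ?_⟩,
        Ideal.mem_span_singleton'.mpr
          ⟨-(1 + (X 0 - 1) * X 1 + (X 0 - 1) ^ 2 * X 1 ^ 2 * (X 0 * X 1 + 1)), ?_⟩⟩) <;>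
  simp only [q, hyperbola, map_sub, map_add, map_mul, map_pow, map_one, aeval_X,
    Matrix.cons_val_zero, Matrix.cons_val_one, Matrix.cons_val_fin_one] <;>
  ring

theorem not_isCriticalPoint_p [IsReduced R] [Nontrivial R] (a : Fin 2 → R) :
    ¬ IsCriticalPoint (p R) a := by
  intro h
  have hx : a 0 ^ 2 = 0 := by simpa [p, pderiv_X] using h 1
  have hy := h 0
  simp [p, pderiv_X, IsReduced.eq_zero _ ⟨2, hx⟩] at hy

theorem isCriticalPoint_q {K : Type*} [Field K] [NeZero (2 : K)] :
    IsCriticalPoint (q K) ![0, -(1 / 2)] := by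
  intro i
  fin_cases i
  · simp [q, pderiv_X]
    linear_combination mul_inv_cancel₀ (two_ne_zero (α := K))
  · simp [q, pderiv_X]

end Example33

open Example33 in
/-- Example 3.3 of the paper: with `x = X 0`, `y = X 1` in `ℂ[x,y]`,
`p = x - x² - x²y - 1` and `q = x - (1 + x + xy)²`: (a) the quotient algebras are
isomorphic; (b) `grad p` vanishes nowhere; (c) `grad q` vanishes at `(0, -1/2)`;
and (d) no `ℂ`-algebra automorphism of `ℂ[x,y]` maps `⟨p⟩` onto `⟨q⟩`. -/
theorem example_3_3
    (p q : MvPolynomial (Fin 2) ℂ)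
    (hp : p = X 0 - X 0 ^ 2 - X 0 ^ 2 * X 1 - 1)
    (hq : q = X 0 - (1 + X 0 + X 0 * X 1) ^ 2) :
    Nonempty ((MvPolynomial (Fin 2) ℂ ⧸ Ideal.span {p}) ≃ₐ[ℂ]
      (MvPolynomial (Fin 2) ℂ ⧸ Ideal.span {q})) ∧
    (¬ ∃ a : Fin 2 → ℂ, ∀ i, eval a (pderiv i p) = 0) ∧
    (∀ i, eval ![(0 : ℂ), -(1/2 : ℂ)] (pderiv i q) = 0) ∧
    ¬ ∃ σ : MvPolynomial (Fin 2) ℂ ≃ₐ[ℂ] MvPolynomial (Fin 2) ℂ,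
      Ideal.map σ (Ideal.span {p}) = Ideal.span {q} := by
  subst hp hq
  refine ⟨⟨quotientPEquivHyperbola.trans quotientQEquivHyperbola.symm⟩,
    fun ⟨a, ha⟩ => not_isCriticalPoint_p a ha, isCriticalPoint_q, ?_⟩
  rintro ⟨e, he⟩
  obtain ⟨b, hb⟩ := exists_isCriticalPoint_of_map_span_eq e he isCriticalPoint_q
  exact not_isCriticalPoint_p b hb
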